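/- Let R be a commutative ring and M a finitely generated projective R-module whose rank at every prime of R equals 2. Then the R-linear map from M to Hom_R(M, ⋀²_R M) sending m to the map n ↦ m ∧ n is bijective; that is, the canonical alternating pairing M × M → ⋀²_R M, (m,n) ↦ m ∧ n, is a perfect pairing. -/

import Mathlib

open ExteriorAlgebra

variable (R M : Type*) [CommRing R] [AddCommGroup M] [Module R M]

/-- The wedge `ι m * ι n` of two elements of `M` lies in the second exterior power
`⋀[R]^2 M` (viewed as a submodule of the exterior algebra). -/
theorem wedge_mem (m n : M) : ι R m * ι R n ∈ ⋀[R]^2 M := by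
  have h := ExteriorAlgebra.ιMulti_range R 2 (M := M) (Set.mem_range_self ![m, n])
  have e : ExteriorAlgebra.ιMulti R 2 ![m, n] = ι R m * ι R n := by
    rw [ExteriorAlgebra.ιMulti_apply]
    simp [List.ofFn_succ]
  rwa [e] at h

/-- The canonical alternating pairing `M × M → ⋀²_R M`, `(m, n) ↦ m ∧ n`, packaged as an
`R`-bilinear map, i.e. as the `R`-linear map `M → Hom_R(M, ⋀²_R M)` sending `m` to
`n ↦ m ∧ n`. -/
noncomputable def wedgePairing : M →ₗ[R] M →ₗ[R] (⋀[R]^2 M : Submodule R (ExteriorAlgebra R M)) where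
  toFun m :=
    LinearMap.codRestrict (⋀[R]^2 M)
      ((LinearMap.mul R (ExteriorAlgebra R M) (ι R m)).comp (ι R))
      (fun n => wedge_mem R M m n)
  map_add' m m' := by
    ext n
    simp [add_mul]
    rfl
  map_smul' r m := by
    ext n
    simp
    rfl

/-!
Bijectivity of an `R`-linear map can be checked after localizing at every maximal ideal, where
`M` becomes free of rank 2 with a basis `e₀, e₁` that may be taken in the image of `M`. An
alternating pairing `B` on a free module of rank 2 satisfies `B x y = det(x, y) • B e₀ e₁`, so it
is a perfect pairing as soon as `ω = e₀ ∧ e₁` freely generates the target. In the localization of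
`⋀²M` this holds because wedges span `⋀²M`, and because the coordinate determinant with respect
to `e` descends to a functional on the localized `⋀²M` that sends `ω` to `1`.
-/

namespace LinearMap.IsAlt

variable {A N P : Type*} [CommRing A] [AddCommGroup N] [Module A N] [AddCommGroup P] [Module A P]
  {B : N →ₗ[A] N →ₗ[A] P}

theorem apply_eq_smul_apply_basis (hB : B.IsAlt) (b : Module.Basis (Fin 2) A N) (x y : N) :
    B x y = (b.repr x 0 * b.repr y 1 - b.repr x 1 * b.repr y 0) • B (b 0) (b 1) := by
  conv_lhs => rw [← b.sum_repr x, ← b.sum_repr y]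
  simp only [Fin.sum_univ_two, map_add, map_smul, LinearMap.add_apply, LinearMap.smul_apply,
    hB.self_eq_zero, ← hB.neg (b 0) (b 1)]
  module

theorem bijective_of_basis_fin_two (hB : B.IsAlt) (b : Module.Basis (Fin 2) A N)
    (hω : Function.Bijective (LinearMap.toSpanSingleton A P (B (b 0) (b 1)))) :
    Function.Bijective B := by
  set ω := B (b 0) (b 1)
  have apply_b0 (x : N) : B x (b 0) = -b.coord 1 x • ω := by
    simp [hB.apply_eq_smul_apply_basis b x, ω]
  have apply_b1 (x : N) : B x (b 1) = b.coord 0 x • ω := by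
    simp [hB.apply_eq_smul_apply_basis b x, ω]
  have eq_zero_of_smul_eq_zero (c : A) (hc : c • ω = 0) : c = 0 := hω.1 (by simpa using hc)
  refine ⟨(injective_iff_map_eq_zero B).mpr fun x hx =>
    b.forall_coord_eq_zero_iff.mp (Fin.forall_fin_two.mpr ⟨?_, ?_⟩), fun φ => ?_⟩
  · exact eq_zero_of_smul_eq_zero _ (by rw [← apply_b1, hx, LinearMap.zero_apply])
  · exact neg_eq_zero.mp
      (eq_zero_of_smul_eq_zero _ (by rw [← apply_b0, hx, LinearMap.zero_apply]))
  · obtain ⟨c₀, hc₀⟩ := hω.2 (φ (b 0))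
    obtain ⟨c₁, hc₁⟩ := hω.2 (φ (b 1))
    refine ⟨c₁ • b 0 - c₀ • b 1, b.ext fun i => ?_⟩
    fin_cases i
    · simpa [apply_b0] using hc₀
    · simpa [apply_b1] using hc₁

end LinearMap.IsAlt

section RestrictScalars

variable (A : Type*) {A' N P ι : Type*} [CommSemiring A] [Semiring A'] [Algebra A A']
  [AddCommMonoid N] [Module A' N] [Module A N] [IsScalarTower A A' N]
  [AddCommMonoid P] [Module A' P] [Module A P] [IsScalarTower A A' P]

def AlternatingMap.restrictScalars (f : N [⋀^ι]→ₗ[A'] P) : N [⋀^ι]→ₗ[A] P where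
  toMultilinearMap := f.toMultilinearMap.restrictScalars A
  map_eq_zero_of_eq' := f.map_eq_zero_of_eq'

@[simp]
theorem AlternatingMap.restrictScalars_apply (f : N [⋀^ι]→ₗ[A'] P) (v : ι → N) :
    f.restrictScalars A v = f v :=
  rfl

end RestrictScalars

theorem IsLocalizedModule.exists_basis_eq_comp {A Aₛ N Nₛ ι : Type*} [CommSemiring A]
    (S : Submonoid A) [CommSemiring Aₛ] [Algebra A Aₛ] [IsLocalization S Aₛ] [AddCommMonoid N]
    [Module A N] [AddCommMonoid Nₛ] [Module A Nₛ] [Module Aₛ Nₛ] [IsScalarTower A Aₛ Nₛ]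
    (f : N →ₗ[A] Nₛ) [IsLocalizedModule S f] (b : Module.Basis ι Aₛ Nₛ) :
    ∃ (b' : Module.Basis ι Aₛ Nₛ) (v : ι → N), ⇑b' = f ∘ v := by
  choose p hp using fun i => IsLocalizedModule.surj S f (b i)
  refine ⟨b.isUnitSMul fun i => IsLocalization.map_units Aₛ (p i).2, fun i => (p i).1,
    funext fun i => ?_⟩
  rw [Module.Basis.isUnitSMul_apply, algebraMap_smul]
  exact hp i

theorem wedgePairing_eq_ιMulti (v : Fin 2 → M) :
    wedgePairing R M (v 0) (v 1) = exteriorPower.ιMulti R 2 v := by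
  apply Subtype.ext
  change ι R (v 0) * ι R (v 1) = ExteriorAlgebra.ιMulti R 2 v
  simp [ExteriorAlgebra.ιMulti_apply, Matrix.vecTail]

section Localization

variable (S : Submonoid R)

local notation "Rₛ" => Localization S
local notation "Mₛ" => LocalizedModule S M
local notation "Lₛ" => LocalizedModule S (⋀[R]^2 M)

noncomputable def localizedWedgeDet (b : Module.Basis (Fin 2) Rₛ Mₛ) : Lₛ →ₗ[Rₛ] Rₛ :=
  (IsLocalizedModule.lift S (LocalizedModule.mkLinearMap S _)
    (exteriorPower.alternatingMapLinearEquiv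
      ((b.det.restrictScalars R).compLinearMap (LocalizedModule.mkLinearMap S M)))
    (IsLocalizedModule.map_units (Algebra.linearMap R Rₛ))).extendScalarsOfIsLocalization S Rₛ

theorem localizedWedgeDet_mk (b : Module.Basis (Fin 2) Rₛ Mₛ) (v : Fin 2 → M) :
    localizedWedgeDet R M S b (LocalizedModule.mkLinearMap S _ (exteriorPower.ιMulti R 2 v)) =
      b.det (LocalizedModule.mkLinearMap S M ∘ v) := by
  rw [localizedWedgeDet, LinearMap.extendScalarsOfIsLocalization_apply',
    IsLocalizedModule.lift_apply, exteriorPower.alternatingMapLinearEquiv_apply_ιMulti,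
    AlternatingMap.compLinearMap_apply, AlternatingMap.restrictScalars_apply]
  rfl

variable [Module.FinitePresentation R M]

noncomputable def localizedWedgePairing : Mₛ →ₗ[Rₛ] Mₛ →ₗ[Rₛ] Lₛ :=
  (IsLocalizedModule.map S (LocalizedModule.mkLinearMap S M) (LocalizedModule.map S)
    (wedgePairing R M)).extendScalarsOfIsLocalization S Rₛ

theorem localizedWedgePairing_mk (m n : M) :
    localizedWedgePairing R M S (LocalizedModule.mkLinearMap S M m)
      (LocalizedModule.mkLinearMap S M n) =
      LocalizedModule.mkLinearMap S _ (wedgePairing R M m n) := by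
  rw [localizedWedgePairing, LinearMap.extendScalarsOfIsLocalization_apply',
    IsLocalizedModule.map_apply]
  simp

theorem localizedWedgePairing_isAlt : (localizedWedgePairing R M S).IsAlt := by
  intro x
  obtain ⟨⟨m, s⟩, hs⟩ := IsLocalizedModule.surj S (LocalizedModule.mkLinearMap S M) x
  have hu : IsUnit (algebraMap R Rₛ s) := IsLocalization.map_units Rₛ s
  have hsx : algebraMap R Rₛ s • x = LocalizedModule.mkLinearMap S M m := by
    rw [algebraMap_smul]
    exact hs
  have hm : wedgePairing R M m m = 0 := Subtype.ext (ExteriorAlgebra.ι_sq_zero m)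
  have := localizedWedgePairing_mk R M S m m
  rw [hm, map_zero, ← hsx] at this
  simpa only [map_smul, LinearMap.smul_apply, hu.smul_eq_zero] using this

theorem bijective_toSpanSingleton_localizedWedgePairing (b : Module.Basis (Fin 2) Rₛ Mₛ)
    (v : Fin 2 → M) (hv : ⇑b = LocalizedModule.mkLinearMap S M ∘ v) :
    Function.Bijective
      (LinearMap.toSpanSingleton Rₛ Lₛ (localizedWedgePairing R M S (b 0) (b 1))) := by
  have hω : localizedWedgePairing R M S (b 0) (b 1) =
      LocalizedModule.mkLinearMap S _ (exteriorPower.ιMulti R 2 v) := by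
    rw [hv, Function.comp_apply, Function.comp_apply, localizedWedgePairing_mk,
      wedgePairing_eq_ιMulti]
  refine ⟨Function.LeftInverse.injective (g := localizedWedgeDet R M S b) fun c => ?_, ?_⟩
  · rw [LinearMap.toSpanSingleton_apply, map_smul, hω, localizedWedgeDet_mk, ← hv,
      Module.Basis.det_self, smul_eq_mul, mul_one]
  · rw [← LinearMap.range_eq_top, LinearMap.range_toSpanSingleton, eq_top_iff,
      ← span_eq_top_of_isLocalizedModule Rₛ S (LocalizedModule.mkLinearMap S (⋀[R]^2 M))
        (exteriorPower.ιMulti_span R 2 (M := M)),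
      Submodule.span_le]
    rintro _ ⟨_, ⟨w, rfl⟩, rfl⟩
    rw [SetLike.mem_coe, Submodule.mem_span_singleton, ← wedgePairing_eq_ιMulti,
      ← localizedWedgePairing_mk]
    -- `P := Lₛ` must be given: unification does not recognise the additive monoid structure
    -- of `Lₛ` as the one underlying its `AddCommGroup` instance.
    exact ⟨_,
      ((localizedWedgePairing_isAlt R M S).apply_eq_smul_apply_basis (P := Lₛ) b _ _).symm⟩

theorem localizedWedgePairing_bijective (b : Module.Basis (Fin 2) Rₛ Mₛ) :
    Function.Bijective (IsLocalizedModule.map S (LocalizedModule.mkLinearMap S M)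
      (LocalizedModule.map S) (wedgePairing R M)) := by
  obtain ⟨b', v, hv⟩ :=
    IsLocalizedModule.exists_basis_eq_comp S (LocalizedModule.mkLinearMap S M) b
  exact (localizedWedgePairing_isAlt R M S).bijective_of_basis_fin_two (P := Lₛ) b'
    (bijective_toSpanSingleton_localizedWedgePairing R M S b' v hv)

end Localization

/-- Let `R` be a commutative ring and `M` a finitely generated projective
`R`-module whose rank at every prime of `R` equals `2`. Then the `R`-linear map
`M → Hom_R(M, ⋀²_R M)`, `m ↦ (n ↦ m ∧ n)`, is bijective: the canonical alternating pairing
`(m, n) ↦ m ∧ n` is a perfect pairing. -/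
theorem wedgePairing_bijective [Module.Finite R M] [Module.Projective R M]
    (hrank : ∀ p : PrimeSpectrum R, Module.rankAtStalk M p = 2) :
    Function.Bijective (wedgePairing R M) := by
  have := Module.finitePresentation_of_projective R M
  refine bijective_of_isLocalized_maximal _ (fun P _ => LocalizedModule.mkLinearMap P.primeCompl M)
    _ (fun P _ => LocalizedModule.map P.primeCompl) _ fun P hP => ?_
  let p : PrimeSpectrum R := ⟨P, hP.isPrime⟩
  have : Module.Free (Localization.AtPrime P) (LocalizedModule P.primeCompl M) :=
    Module.mem_freeLocus.mp (Module.freeLocus_eq_univ (R := R) (M := M) ▸ Set.mem_univ p)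
  exact localizedWedgePairing_bijective R M P.primeCompl (Module.finBasisOfFinrankEq _ _ (hrank p))
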